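/- arXiv:math/0010183 — 6 statements merged into one kernel-verified Lean document; each statement's English description precedes it below -/
import Mathlib

section
/- Let (λ_k)_{1≤k≤N}, N ≤ ∞, satisfy condition (1). Then there exist positive constants C₁ and C₂ such that for every λ ∈ ℂ with |λ| > C₂ the product defining the Blaschke product B(λ) converges and |B(λ)| < C₁. -/
/-!
Each factor is `1 + 2 Re λ_k / (λ - λ_k)`. The `λ_k` are bounded, so once `|λ|` exceeds
`sup |λ_k| + 2` the perturbation is at most `|Re λ_k|`, which is summable. Hence the product
converges absolutely and `|B(λ)| ≤ exp (∑ |Re λ_k|)`.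
-/

open Complex ComplexConjugate

section NormedRing

variable {ι R : Type*} [NormedCommRing R] [NormOneClass R] {f : ι → R}

lemma norm_tprod_one_add_le_exp_tsum_norm [CompleteSpace R] (hf : Summable fun i ↦ ‖f i‖) :
    ‖∏' i, (1 + f i)‖ ≤ Real.exp (∑' i, ‖f i‖) := by
  have hprod := (multipliable_one_add_of_summable hf).hasProd
  refine le_of_tendsto' (continuous_norm.tendsto _ |>.comp hprod) fun t ↦ ?_
  calc ‖∏ i ∈ t, (1 + f i)‖
      ≤ ∏ i ∈ t, ‖1 + f i‖ := Finset.norm_prod_le _ _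
    _ ≤ ∏ i ∈ t, (1 + ‖f i‖) := Finset.prod_le_prod (fun _ _ ↦ norm_nonneg _)
        fun i _ ↦ (norm_add_le _ _).trans_eq (by rw [norm_one])
    _ ≤ Real.exp (∑ i ∈ t, ‖f i‖) := Real.prod_one_add_le_exp_sum _ fun _ ↦ norm_nonneg _
    _ ≤ Real.exp (∑' i, ‖f i‖) :=
        Real.exp_le_exp.mpr (hf.sum_le_tsum _ fun _ _ ↦ norm_nonneg _)

end NormedRing

lemma blaschke_factor_eq_one_add {z w : ℂ} (hzw : z ≠ w) :
    (z + conj w) / (z - w) = 1 + 2 * (w.re : ℂ) / (z - w) := by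
  have hnum : z + conj w = (z - w) + 2 * (w.re : ℂ) := by
    rw [re_eq_add_conj]
    ring
  rw [hnum, add_div, div_self (sub_ne_zero.mpr hzw)]

lemma norm_two_mul_re_div_le {z w : ℂ} (hzw : 2 ≤ ‖z - w‖) :
    ‖2 * (w.re : ℂ) / (z - w)‖ ≤ |w.re| := by
  rw [norm_div, norm_mul, norm_real, Real.norm_eq_abs, Complex.norm_two,
    div_le_iff₀ (by linarith)]
  nlinarith [abs_nonneg w.re]

theorem stmt_0_general {ι : Type*} (l : ι → ℂ)
    (h2 : Summable fun k => |(l k).re|)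
    (h3 : ∃ R > (0:ℝ), ∀ k, |(l k).im| < R) :
    ∃ C₁ > (0:ℝ), ∃ C₂ > (0:ℝ), ∀ z : ℂ, C₂ < ‖z‖ →
      Multipliable (fun k => (z + (starRingEnd ℂ) (l k)) / (z - l k)) ∧
      ‖∏' k, (z + (starRingEnd ℂ) (l k)) / (z - l k)‖ < C₁ := by
  obtain ⟨R, hR, him⟩ := h3
  set S := ∑' k, |(l k).re|
  have hS : 0 ≤ S := tsum_nonneg fun _ ↦ abs_nonneg _
  have hl : ∀ k, ‖l k‖ ≤ S + R := fun k ↦ (norm_le_abs_re_add_abs_im _).trans <|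
    add_le_add (h2.le_tsum k fun _ _ ↦ abs_nonneg _) (him k).le
  refine ⟨Real.exp S + 1, by positivity, S + R + 2, by positivity, fun z hz ↦ ?_⟩
  have hfar : ∀ k, 2 ≤ ‖z - l k‖ := fun k ↦ by
    linarith [norm_sub_norm_le z (l k), hl k]
  have hfactor : (fun k ↦ (z + conj (l k)) / (z - l k)) =
      fun k ↦ 1 + 2 * ((l k).re : ℂ) / (z - l k) := funext fun k ↦
    blaschke_factor_eq_one_add <| sub_ne_zero.mp <| norm_pos_iff.mp (by linarith [hfar k])
  have hsmall := fun k ↦ norm_two_mul_re_div_le (hfar k)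
  have hsum : Summable fun k ↦ ‖2 * ((l k).re : ℂ) / (z - l k)‖ :=
    h2.of_nonneg_of_le (fun _ ↦ norm_nonneg _) hsmall
  rw [hfactor]
  refine ⟨multipliable_one_add_of_summable hsum, ?_⟩
  calc ‖∏' k, (1 + 2 * ((l k).re : ℂ) / (z - l k))‖
      ≤ Real.exp (∑' k, ‖2 * ((l k).re : ℂ) / (z - l k)‖) :=
        norm_tprod_one_add_le_exp_tsum_norm hsum
    _ ≤ Real.exp S := Real.exp_le_exp.mpr (hsum.tsum_le_tsum hsmall h2)
    _ < Real.exp S + 1 := lt_add_one _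

/-- For a (finite or countable) family `(λ_k)` of complex numbers
satisfying condition (1) (`Re λ_k < 0`, `∑ |Re λ_k| < ∞`, imaginary parts uniformly
bounded), there are positive constants `C₁, C₂` such that for every `λ ∈ ℂ` with
`|λ| > C₂` the Blaschke product `B(λ) = ∏_k (λ + conj λ_k)/(λ - λ_k)` converges and
`|B(λ)| < C₁`. -/
theorem stmt_0 {ι : Type*} [Countable ι] (l : ι → ℂ)
    (h1 : ∀ k, (l k).re < 0)
    (h2 : Summable fun k => |(l k).re|)
    (h3 : ∃ R > (0:ℝ), ∀ k, |(l k).im| < R) :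
    ∃ C₁ > (0:ℝ), ∃ C₂ > (0:ℝ), ∀ z : ℂ, C₂ < ‖z‖ →
      Multipliable (fun k => (z + (starRingEnd ℂ) (l k)) / (z - l k)) ∧
      ‖∏' k, (z + (starRingEnd ℂ) (l k)) / (z - l k)‖ < C₁ :=
  stmt_0_general l h2 h3
end

section
/- Let (λ_k)_{1≤k≤N}, N ≤ ∞, satisfy condition (1), and set s = −∑_k Re λ_k, so 0 < s < ∞. Then the Blaschke product satisfies B(λ) = 1 − 2s/λ + o(1/λ) as |λ| → ∞; equivalently, λ·(B(λ) − 1) → −2s as |λ| → ∞. -/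
/-!
Write `B(z) = ∏ (1 + f_k z)` with `f_k z = 2 Re λ_k / (z - λ_k)`. For large `|z|` all factors are
close to `1`, so `B = exp T` with `T = ∑ log (1 + f_k)`. Each `z · log (1 + f_k z)` tends to
`2 Re λ_k` and is bounded by a multiple of `|Re λ_k|`, so dominated convergence gives
`z · T(z) → 2 ∑ Re λ_k = -2s`; in particular `T → 0`, and `exp T - 1 = T + O(T²)` finishes.
-/

open Filter Topology Bornology Asymptotics ComplexConjugate

theorem Filter.Tendsto.mul_comp_of_sub_isBigO_sq {𝕜 α : Type*} [NormedField 𝕜] {l : Filter α}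
    {z f : α → 𝕜} {c : 𝕜} {g : 𝕜 → 𝕜} (hg : (fun w => g w - w) =O[𝓝 0] fun w => w ^ 2)
    (hzf : Tendsto (fun x => z x * f x) l (𝓝 c)) (hf : Tendsto f l (𝓝 0)) :
    Tendsto (fun x => z x * g (f x)) l (𝓝 c) := by
  have hrem : (fun x => z x * (g (f x) - f x)) =O[l] fun x => z x * f x * f x := by
    simpa only [Function.comp_def, sq, mul_assoc] using (isBigO_refl z l).mul (hg.comp_tendsto hf)
  have hrem0 := hrem.trans_tendsto (by simpa using hzf.mul hf)
  simpa [mul_sub] using hzf.add hrem0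

lemma tendsto_zero_of_tendsto_mul_cobounded {𝕜 : Type*} [NormedField 𝕜] {f : 𝕜 → 𝕜} {c : 𝕜}
    (h : Tendsto (fun z => z * f z) (cobounded 𝕜) (𝓝 c)) : Tendsto f (cobounded 𝕜) (𝓝 0) :=
  tendsto_zero_of_isBoundedUnder_smul_of_tendsto_cobounded (f := id) h.norm.isBoundedUnder_le
    tendsto_id

namespace Complex

lemma exp_sub_one_sub_self_isBigO : (fun w => (exp w - 1) - w) =O[𝓝 0] fun w => w ^ 2 := by
  simpa [Finset.sum_range_succ, sub_sub] using exp_sub_sum_range_isBigO_pow 2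

section InfiniteProduct

variable {ι : Type*} {f : ι → ℂ → ℂ} {c : ι → ℂ} {b : ι → ℝ}

lemma eventually_forall_norm_le_half_of_norm_mul_le (hb : Summable b)
    (hbound : ∀ᶠ z in cobounded ℂ, ∀ k, ‖z * f k z‖ ≤ b k) :
    ∀ᶠ z in cobounded ℂ, ∀ k, ‖f k z‖ ≤ 1 / 2 := by
  obtain ⟨z₀, hz₀⟩ := hbound.exists
  have hb0 : ∀ k, 0 ≤ b k := fun k => (norm_nonneg _).trans (hz₀ k)
  filter_upwards [hbound, eventually_cobounded_le_norm (2 * ∑' k, b k + 1)] with z hz hzn k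
  have hle : ‖z‖ * ‖f k z‖ ≤ ∑' k, b k :=
    (norm_mul z _ ▸ hz k).trans (hb.le_tsum k fun j _ => hb0 j)
  have hS : 0 ≤ ∑' k, b k := tsum_nonneg hb0
  nlinarith [mul_nonneg (sub_nonneg.2 hzn) (norm_nonneg (f k z))]

lemma eventually_summable_of_norm_mul_le (hb : Summable b)
    (hbound : ∀ᶠ z in cobounded ℂ, ∀ k, ‖z * f k z‖ ≤ b k) :
    ∀ᶠ z in cobounded ℂ, Summable fun k => f k z := by
  filter_upwards [hbound, eventually_cobounded_le_norm 1] with z hz hz1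
  refine (hb.mul_left ‖z‖⁻¹).of_norm_bounded fun k => ?_
  rw [le_inv_mul_iff₀ (by linarith), ← norm_mul]
  exact hz k

lemma tendsto_mul_tsum_log_one_add (hb : Summable b)
    (hlim : ∀ k, Tendsto (fun z => z * f k z) (cobounded ℂ) (𝓝 (c k)))
    (hbound : ∀ᶠ z in cobounded ℂ, ∀ k, ‖z * f k z‖ ≤ b k) :
    Tendsto (fun z => z * ∑' k, log (1 + f k z)) (cobounded ℂ) (𝓝 (∑' k, c k)) := by
  have hlog (k : ι) : Tendsto (fun z => z * log (1 + f k z)) (cobounded ℂ) (𝓝 (c k)) :=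
    (hlim k).mul_comp_of_sub_isBigO_sq (g := fun w => log (1 + w)) log_sub_self_isBigO
      (tendsto_zero_of_tendsto_mul_cobounded (hlim k))
  have hdom : ∀ᶠ z in cobounded ℂ, ∀ k, ‖z * log (1 + f k z)‖ ≤ 3 / 2 * b k := by
    filter_upwards [hbound, eventually_forall_norm_le_half_of_norm_mul_le hb hbound]
      with z hz hhalf k
    calc ‖z * log (1 + f k z)‖ ≤ ‖z‖ * (3 / 2 * ‖f k z‖) := by
          rw [norm_mul]; gcongr; exact norm_log_one_add_half_le_self (hhalf k)
      _ = 3 / 2 * ‖z * f k z‖ := by rw [norm_mul]; ring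
      _ ≤ 3 / 2 * b k := by gcongr; exact hz k
  simpa only [tsum_mul_left] using
    tendsto_tsum_of_dominated_convergence (hb.mul_left (3 / 2)) hlog hdom

theorem tendsto_mul_tprod_one_add_sub_one (hb : Summable b)
    (hlim : ∀ k, Tendsto (fun z => z * f k z) (cobounded ℂ) (𝓝 (c k)))
    (hbound : ∀ᶠ z in cobounded ℂ, ∀ k, ‖z * f k z‖ ≤ b k) :
    Tendsto (fun z => z * (∏' k, (1 + f k z) - 1)) (cobounded ℂ) (𝓝 (∑' k, c k)) := by
  have hT := tendsto_mul_tsum_log_one_add hb hlim hbound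
  have hT0 := tendsto_zero_of_tendsto_mul_cobounded hT
  refine (hT.mul_comp_of_sub_isBigO_sq (g := fun w => exp w - 1) exp_sub_one_sub_self_isBigO
    hT0).congr' ?_
  filter_upwards [eventually_forall_norm_le_half_of_norm_mul_le hb hbound,
    eventually_summable_of_norm_mul_le hb hbound] with z hhalf hsum
  have hne (k : ι) : 1 + f k z ≠ 0 := fun h => by
    have := hhalf k
    rw [eq_neg_of_add_eq_zero_right h] at this
    norm_num at this
  rw [cexp_tsum_eq_tprod hne (summable_log_one_add_of_summable hsum)]

end InfiniteProduct

lemma add_conj_div_sub_eq_one_add {z w : ℂ} (h : z ≠ w) :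
    (z + conj w) / (z - w) = 1 + 2 * w.re / (z - w) := by
  have hconj : conj w = 2 * w.re - w := by
    have := add_conj w
    push_cast at this
    linear_combination this
  rw [hconj]
  field_simp [sub_ne_zero.mpr h]
  ring

lemma tendsto_mul_div_sub_cobounded (a w : ℂ) :
    Tendsto (fun z => z * (a / (z - w))) (cobounded ℂ) (𝓝 a) := by
  have hinv : Tendsto (fun z => (z - w)⁻¹) (cobounded ℂ) (𝓝 0) :=
    tendsto_inv₀_cobounded.comp (tendsto_sub_const_cobounded w)
  have hlim : Tendsto (fun z => a + a * w * (z - w)⁻¹) (cobounded ℂ) (𝓝 a) := by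
    simpa using (hinv.const_mul (a * w)).const_add a
  refine hlim.congr' ?_
  filter_upwards [eventually_ne_cobounded w] with z hz
  field_simp [sub_ne_zero.mpr hz]
  ring

lemma eventually_norm_mul_div_sub_le (M : ℝ) :
    ∀ᶠ z in cobounded ℂ, ∀ a w : ℂ, ‖w‖ ≤ M → ‖z * (a / (z - w))‖ ≤ 2 * ‖a‖ := by
  filter_upwards [eventually_cobounded_le_norm (2 * M + 1)] with z hz a w hw
  have hzw : ‖z‖ ≤ 2 * ‖z - w‖ := by linarith [norm_sub_norm_le z w, norm_nonneg w]
  rw [norm_mul, norm_div, ← mul_div_assoc, div_le_iff₀ (by linarith [norm_nonneg w])]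
  nlinarith [mul_le_mul_of_nonneg_left hzw (norm_nonneg a)]

end Complex

open Complex

theorem stmt_1_general {ι : Type*} [Nonempty ι] (l : ι → ℂ)
    (h1 : ∀ k, (l k).re < 0)
    (h2 : Summable fun k => |(l k).re|)
    (h3 : ∃ R > (0:ℝ), ∀ k, |(l k).im| < R)
    (s : ℝ) (hs : s = -∑' k, (l k).re) :
    0 < s ∧
    Filter.Tendsto
      (fun z : ℂ => z * ((∏' k, (z + (starRingEnd ℂ) (l k)) / (z - l k)) - 1))
      (Filter.comap (fun z : ℂ => ‖z‖) Filter.atTop)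
      (nhds ((-2 * s : ℝ) : ℂ)) := by
  obtain ⟨R, -, hR⟩ := h3
  have hre : Summable fun k => (l k).re := h2.of_abs
  refine ⟨?_, ?_⟩
  · rw [hs, ← tsum_neg]
    exact hre.neg.tsum_pos (fun k => (neg_pos.2 (h1 k)).le) (Classical.arbitrary ι)
      (neg_pos.2 (h1 _))
  set M := ∑' j, |(l j).re| + R
  have hlM (k : ι) : ‖l k‖ ≤ M := (norm_le_abs_re_add_abs_im _).trans
    (add_le_add (h2.le_tsum k fun j _ => abs_nonneg _) (hR k).le)
  have hb : Summable fun k => 2 * ‖2 * ((l k).re : ℂ)‖ :=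
    (h2.mul_left 4).congr fun k => by
      rw [norm_mul, Complex.norm_two, norm_real, Real.norm_eq_abs]; ring
  have hlim := tendsto_mul_tprod_one_add_sub_one (f := fun k z => 2 * (l k).re / (z - l k)) hb
    (fun k => tendsto_mul_div_sub_cobounded _ _)
    ((eventually_norm_mul_div_sub_le M).mono fun z hz k => hz _ _ (hlM k))
  have hsum : ∑' k, 2 * ((l k).re : ℂ) = ((-2 * s : ℝ) : ℂ) := by
    rw [tsum_mul_left, ← ofReal_tsum, hs]
    push_cast
    ring
  rw [comap_norm_atTop, ← hsum]
  refine hlim.congr' ?_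
  filter_upwards [eventually_cobounded_le_norm (M + 1)] with z hz
  have hne (k : ι) : z ≠ l k := fun h => by linarith [hlM k, h ▸ hz]
  rw [tprod_congr fun k => add_conj_div_sub_eq_one_add (hne k)]

/-- Under condition (1), with `s = -∑_k Re λ_k` one has `0 < s < ∞`, and
the Blaschke product `B(λ) = ∏_k (λ + conj λ_k)/(λ - λ_k)` satisfies
`B(λ) = 1 - 2s/λ + o(1/λ)` as `|λ| → ∞`; equivalently `λ·(B(λ) - 1) → -2s`. -/
theorem stmt_1 {ι : Type*} [Countable ι] [Nonempty ι] (l : ι → ℂ)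
    (h1 : ∀ k, (l k).re < 0)
    (h2 : Summable fun k => |(l k).re|)
    (h3 : ∃ R > (0:ℝ), ∀ k, |(l k).im| < R)
    (s : ℝ) (hs : s = -∑' k, (l k).re) :
    0 < s ∧
    Filter.Tendsto
      (fun z : ℂ => z * ((∏' k, (z + (starRingEnd ℂ) (l k)) / (z - l k)) - 1))
      (Filter.comap (fun z : ℂ => ‖z‖) Filter.atTop)
      (nhds ((-2 * s : ℝ) : ℂ)) :=
  stmt_1_general l h1 h2 h3 s hs
end

section
/- For every μ ∈ ℂ with Re μ < 0 and every t ≥ 0, let f ∈ K be the truncated exponential f(x) = e^{μx} for x > t and f(x) = 0 for 0 < x < t. Then ⟨Θf, f⟩ = B(−conj(μ))·‖f‖², where ‖f‖² = e^{2t·Re μ}/(−2 Re μ). -/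
open MeasureTheory ComplexInnerProductSpace

noncomputable section

/-- The measure defining `K = L²(0,∞)`. -/
def mu0 : Measure ℝ := volume.restrict (Set.Ioi (0:ℝ))

/-- The Hilbert space `K = L²(0,∞)`. -/
abbrev Kspace := Lp ℂ 2 mu0

/-- The Laplace transform `(Lf)(λ) = ∫₀^∞ e^{-λx} f(x) dx` of `f ∈ K`. -/
def Laplace (f : Kspace) (z : ℂ) : ℂ := ∫ x : ℝ, Complex.exp (-z * x) * f x ∂mu0

/-! The Laplace transform is injective on `L²(0,∞)`: after the substitution `u = e^{-x}` this is
the density of polynomials in `C[0,1]` (Lerch's theorem). Since the right shift `S_t` multiplies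
Laplace transforms by `e^{-λt}` and `Θ` multiplies them by `B(λ)`, the two operators commute.
With `e_μ(x) = e^{μx}` one has `⟨u, e_μ⟩ = (Lu)(-conj μ)`, so `⟨Θ e_μ, e_μ⟩ = B(-conj μ)‖e_μ‖²`;
the truncated exponential is `f = S_t (e^{μt} e_μ)`, and `S_t` is an isometry commuting with `Θ`. -/

open Filter Topology Set

section Lerch

variable {E : Type*} [NormedAddCommGroup E] [NormedSpace ℝ E] {φ : ℝ → E}

lemma exists_continuous_comp_exp_neg {g : ℝ → ℝ} (hg : Continuous g)
    (hg0 : Tendsto g atTop (𝓝 0)) :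
    ∃ G : ℝ → ℝ, Continuous G ∧ g = fun x => G (Real.exp (-x)) := by
  refine ⟨fun u => if 0 < u then g (-Real.log u) else 0, ?_, ?_⟩
  · refine continuous_iff_continuousAt.2 fun u => ?_
    rcases lt_trichotomy u 0 with hu | rfl | hu
    · exact continuousAt_const.congr <|
        (eventually_lt_nhds hu).mono fun v hv => (if_neg hv.not_gt).symm
    · have hpos : Tendsto (fun v => g (-Real.log v)) (𝓝[>] 0) (𝓝 0) :=
        hg0.comp (tendsto_neg_atBot_atTop.comp Real.tendsto_log_nhdsGT_zero)
      rw [ContinuousAt, ← nhdsLE_sup_nhdsGT, if_neg (lt_irrefl 0)]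
      refine Tendsto.sup (tendsto_const_nhds.congr' ?_) (hpos.congr' ?_)
      · filter_upwards [self_mem_nhdsWithin] with v (hv : v ≤ 0) using (if_neg hv.not_gt).symm
      · filter_upwards [self_mem_nhdsWithin] with v (hv : 0 < v) using (if_pos hv).symm
    · exact (hg.continuousAt.comp (Real.continuousAt_log hu.ne').neg).congr <|
        (eventually_gt_nhds hu).mono fun v hv => (if_pos hv).symm
  · funext x
    simp [Real.exp_pos]

lemma integrable_comp_exp_neg_smul (hφ : Integrable φ mu0) {G : ℝ → ℝ} (hG : Continuous G) :
    Integrable (fun x => G (Real.exp (-x)) • φ x) mu0 := by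
  obtain ⟨C, hC⟩ :=
    (isCompact_Icc (a := (0:ℝ)) (b := 1)).exists_bound_of_continuousOn hG.continuousOn
  refine hφ.bdd_smul C (hG.comp (Real.continuous_exp.comp continuous_neg)).aestronglyMeasurable ?_
  filter_upwards [ae_restrict_mem measurableSet_Ioi] with x (hx : 0 < x)
  exact hC _ ⟨(Real.exp_pos _).le, Real.exp_le_one_iff.2 (neg_nonpos.2 hx.le)⟩

variable (hφ : Integrable φ mu0) (hmom : ∀ n : ℕ, ∫ x, Real.exp (-x) ^ n • φ x ∂mu0 = 0)
include hφ hmom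

lemma integral_polynomial_exp_neg_smul_eq_zero (q : Polynomial ℝ) :
    ∫ x, q.eval (Real.exp (-x)) • φ x ∂mu0 = 0 := by
  induction q using Polynomial.induction_on' with
  | add p q hp hq =>
    simp only [Polynomial.eval_add, add_smul]
    rw [integral_add (integrable_comp_exp_neg_smul hφ p.continuous)
      (integrable_comp_exp_neg_smul hφ q.continuous), hp, hq, add_zero]
  | monomial n a =>
    simp only [Polynomial.eval_monomial, mul_smul]
    rw [integral_smul, hmom, smul_zero]

lemma integral_comp_exp_neg_smul_eq_zero {G : ℝ → ℝ} (hG : Continuous G) :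
    ∫ x, G (Real.exp (-x)) • φ x ∂mu0 = 0 := by
  set I := ∫ x, G (Real.exp (-x)) • φ x ∂mu0
  suffices h : ∀ ε > 0, ‖I‖ ≤ ε * ∫ x, ‖φ x‖ ∂mu0 by
    have hlim : Tendsto (fun ε => ε * ∫ x, ‖φ x‖ ∂mu0) (𝓝[>] 0) (𝓝 0) :=
      ((continuous_mul_const _).tendsto' 0 0 (zero_mul _)).mono_left nhdsWithin_le_nhds
    exact norm_le_zero_iff.1 (ge_of_tendsto hlim (eventually_mem_nhdsWithin.mono h))
  intro ε hε
  obtain ⟨q, hq⟩ := exists_polynomial_near_of_continuousOn 0 1 G hG.continuousOn ε hε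
  have hI : I = ∫ x, (G (Real.exp (-x)) - q.eval (Real.exp (-x))) • φ x ∂mu0 := by
    simp only [sub_smul]
    rw [integral_sub (integrable_comp_exp_neg_smul hφ hG)
      (integrable_comp_exp_neg_smul hφ q.continuous),
      integral_polynomial_exp_neg_smul_eq_zero hφ hmom, sub_zero]
  rw [hI, ← integral_const_mul]
  refine norm_integral_le_of_norm_le (hφ.norm.const_mul ε) ?_
  filter_upwards [ae_restrict_mem measurableSet_Ioi] with x (hx : 0 < x)
  rw [norm_smul, Real.norm_eq_abs, abs_sub_comm]
  gcongr
  exact (hq _ ⟨(Real.exp_pos _).le, Real.exp_le_one_iff.2 (neg_nonpos.2 hx.le)⟩).le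

theorem ae_eq_zero_of_integral_exp_neg_pow_smul_eq_zero [CompleteSpace E] : φ =ᵐ[mu0] 0 :=
  ae_eq_zero_of_integral_contDiff_smul_eq_zero hφ.locallyIntegrable fun g hg hgc => by
    obtain ⟨G, hG, rfl⟩ := exists_continuous_comp_exp_neg hg.continuous
      (hgc.is_zero_at_infty.mono_left atTop_le_cocompact)
    exact integral_comp_exp_neg_smul_eq_zero hφ hmom hG

end Lerch

section Shift

lemma measurePreserving_sub_mu0 (t : ℝ) :
    MeasurePreserving (· - t) (volume.restrict (Ioi t)) mu0 := by
  have h := (measurePreserving_sub_right volume t).restrict_preimage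
    (measurableSet_Ioi (a := (0:ℝ)))
  rwa [show (· - t) ⁻¹' Ioi (0:ℝ) = Ioi t by ext; simp] at h

variable {t : ℝ} (ht : 0 ≤ t)
include ht

lemma mu0_restrict_Ioi : mu0.restrict (Ioi t) = volume.restrict (Ioi t) := by
  rw [mu0, Measure.restrict_restrict measurableSet_Ioi, Ioi_inter_Ioi, max_eq_left ht]

lemma integral_indicator_Ioi_comp_sub {E : Type*} [NormedAddCommGroup E] [NormedSpace ℝ E]
    (F : ℝ → E) : ∫ x, (Ioi t).indicator (fun x => F (x - t)) x ∂mu0 = ∫ y, F y ∂mu0 := by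
  rw [integral_indicator measurableSet_Ioi, mu0_restrict_Ioi ht,
    (measurePreserving_sub_mu0 t).integral_comp (MeasurableEquiv.subRight t).measurableEmbedding]

lemma memLp_indicator_Ioi_comp_sub (u : Kspace) :
    MemLp ((Ioi t).indicator fun x => u (x - t)) 2 mu0 := by
  rw [memLp_indicator_iff_restrict measurableSet_Ioi, mu0_restrict_Ioi ht]
  exact (Lp.memLp u).comp_measurePreserving (measurePreserving_sub_mu0 t)

def rightShift (u : Kspace) : Kspace := (memLp_indicator_Ioi_comp_sub ht u).toLp

lemma rightShift_ae_eq {u : Kspace} {F : ℝ → ℂ} (hu : u =ᵐ[mu0] F) :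
    rightShift ht u =ᵐ[mu0] (Ioi t).indicator fun x => F (x - t) := by
  have hcomp : ∀ᵐ x ∂mu0, x ∈ Ioi t → u (x - t) = F (x - t) := by
    refine ae_imp_of_ae_restrict ?_
    rw [mu0_restrict_Ioi ht]
    exact (measurePreserving_sub_mu0 t).quasiMeasurePreserving.ae_eq_comp hu
  filter_upwards [MemLp.coeFn_toLp (memLp_indicator_Ioi_comp_sub ht u), hcomp] with x hx hux
  rw [rightShift, hx]
  by_cases hxt : x ∈ Ioi t
  · simp only [indicator_of_mem hxt, hux hxt]
  · simp only [indicator_of_notMem hxt]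

lemma inner_rightShift (u v : Kspace) : ⟪rightShift ht u, rightShift ht v⟫ = ⟪u, v⟫ := by
  rw [L2.inner_def, L2.inner_def]
  refine (integral_congr_ae ?_).trans (integral_indicator_Ioi_comp_sub ht _)
  filter_upwards [rightShift_ae_eq ht (ae_eq_refl u), rightShift_ae_eq ht (ae_eq_refl v)]
    with x hu hv
  rw [hu, hv]
  by_cases hxt : x ∈ Ioi t
  · simp only [indicator_of_mem hxt]
  · simp only [indicator_of_notMem hxt, inner_zero_left]

lemma norm_rightShift (u : Kspace) : ‖rightShift ht u‖ = ‖u‖ := by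
  rw [norm_eq_sqrt_re_inner (𝕜 := ℂ), norm_eq_sqrt_re_inner (𝕜 := ℂ), inner_rightShift]

lemma laplace_rightShift (u : Kspace) (z : ℂ) :
    Laplace (rightShift ht u) z = Complex.exp (-z * t) * Laplace u z := by
  rw [Laplace, Laplace, ← integral_const_mul]
  refine (integral_congr_ae ?_).trans (integral_indicator_Ioi_comp_sub ht _)
  filter_upwards [rightShift_ae_eq ht (ae_eq_refl u)] with x hu
  rw [hu]
  by_cases hxt : x ∈ Ioi t
  · simp only [indicator_of_mem hxt]
    rw [← mul_assoc, ← Complex.exp_add]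
    push_cast
    ring_nf
  · simp only [indicator_of_notMem hxt, mul_zero]

end Shift

section Laplace

lemma memLp_cexp_mul {w : ℂ} (hw : w.re < 0) :
    MemLp (fun x : ℝ => Complex.exp (w * x)) 2 mu0 := by
  have hmeas : AEStronglyMeasurable (fun x : ℝ => Complex.exp (w * x)) mu0 := by fun_prop
  rw [memLp_two_iff_integrable_sq_norm hmeas]
  refine ((integrableOn_exp_mul_complex_Ioi (a := 2 * w.re)
    (by simpa using mul_neg_of_pos_of_neg two_pos hw) 0).norm).congr ?_
  refine ae_of_all _ fun x => ?_
  beta_reduce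
  rw [Complex.norm_exp, Complex.norm_exp, sq, ← Real.exp_add]
  simp only [Complex.mul_re, Complex.ofReal_re, Complex.ofReal_im, Complex.re_ofNat,
    Complex.im_ofNat]
  ring_nf

lemma integrable_laplace_integrand (u : Kspace) {z : ℂ} (hz : 0 < z.re) :
    Integrable (fun x : ℝ => Complex.exp (-z * x) * u x) mu0 :=
  (memLp_cexp_mul (by simpa using hz)).integrable_mul (Lp.memLp u)

theorem eq_of_laplace_eq {u v : Kspace} (h : ∀ z : ℂ, 0 < z.re → Laplace u z = Laplace v z) :
    u = v := by
  set φ : ℝ → ℂ := fun x : ℝ => Complex.exp (-1 * x) * (u x - v x)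
  have hφ : Integrable φ mu0 :=
    (integrable_laplace_integrand u (z := 1) (by simp)).sub
      (integrable_laplace_integrand v (z := 1) (by simp)) |>.congr
      (ae_of_all _ fun x => by simp only [φ, Pi.sub_apply, mul_sub])
  have hmom : ∀ n : ℕ, ∫ x, Real.exp (-x) ^ n • φ x ∂mu0 = 0 := by
    intro n
    have hz : 0 < ((n + 1 : ℂ)).re := by
      rw [Complex.add_re, Complex.natCast_re, Complex.one_re]
      positivity
    have hpow : ∀ x : ℝ, Real.exp (-x) ^ n • φ x = Complex.exp (-(n + 1) * x) * (u x - v x) := by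
      intro x
      simp only [φ, Complex.real_smul, Complex.ofReal_pow, Complex.ofReal_exp, ← mul_assoc,
        ← Complex.exp_nat_mul, ← Complex.exp_add]
      push_cast
      ring_nf
    simp_rw [hpow, mul_sub]
    rw [integral_sub (integrable_laplace_integrand u hz) (integrable_laplace_integrand v hz)]
    exact sub_eq_zero.2 (h _ hz)
  refine Lp.ext ?_
  filter_upwards [ae_eq_zero_of_integral_exp_neg_pow_smul_eq_zero hφ hmom] with x hx
  simpa [φ, Complex.exp_ne_zero, sub_eq_zero] using hx

lemma map_rightShift_of_laplace_eq_mul {T : Kspace → Kspace} {B : ℂ → ℂ}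
    (hT : ∀ u z, 0 < z.re → Laplace (T u) z = B z * Laplace u z) {t : ℝ} (ht : 0 ≤ t)
    (u : Kspace) : T (rightShift ht u) = rightShift ht (T u) :=
  eq_of_laplace_eq fun z hz => by
    rw [hT _ _ hz, laplace_rightShift, laplace_rightShift, hT _ _ hz, mul_left_comm]

lemma inner_toLp_cexp_mul {w : ℂ} (hw : w.re < 0) (u : Kspace) :
    ⟪(memLp_cexp_mul hw).toLp, u⟫ = Laplace u (-starRingEnd ℂ w) := by
  rw [L2.inner_def, Laplace]
  refine integral_congr_ae ?_
  filter_upwards [(memLp_cexp_mul hw).coeFn_toLp] with x hx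
  rw [hx, RCLike.inner_apply', ← Complex.exp_conj, neg_neg, map_mul, Complex.conj_ofReal]

lemma norm_toLp_cexp_mul_sq {w : ℂ} (hw : w.re < 0) :
    ‖(memLp_cexp_mul hw).toLp‖ ^ 2 = 1 / (-2 * w.re) := by
  set e : Kspace := (memLp_cexp_mul hw).toLp
  have hnorm : ((‖e‖ ^ 2 : ℝ) : ℂ) = Laplace e (-starRingEnd ℂ w) := by
    rw [← inner_toLp_cexp_mul hw e]
    push_cast
    exact (inner_self_eq_norm_sq_to_K (𝕜 := ℂ) e).symm
  have hlap : Laplace e (-starRingEnd ℂ w) = ∫ x : ℝ in Ioi 0, Complex.exp (2 * w.re * x) := by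
    refine integral_congr_ae ?_
    filter_upwards [(memLp_cexp_mul hw).coeFn_toLp] with x hx
    rw [hx, neg_neg, ← Complex.exp_add, ← add_mul, add_comm, Complex.add_conj]
    push_cast
    rfl
  have h : ((‖e‖ ^ 2 : ℝ) : ℂ) = ((1 / (-2 * w.re) : ℝ) : ℂ) := by
    rw [hnorm, hlap, integral_exp_mul_complex_Ioi (by simpa using mul_neg_of_pos_of_neg two_pos hw),
      Complex.ofReal_zero, mul_zero, Complex.exp_zero]
    push_cast
    ring
  exact_mod_cast h

lemma inner_map_eq_mul_inner_self {T : Kspace → Kspace} {B : ℂ → ℂ}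
    (hT : ∀ u z, 0 < z.re → Laplace (T u) z = B z * Laplace u z) {v : Kspace} {c z : ℂ}
    (hz : 0 < z.re) (hv : ∀ u, ⟪v, u⟫ = c * Laplace u z) : ⟪v, T v⟫ = B z * ⟪v, v⟫ := by
  rw [hv, hv, hT _ _ hz, mul_left_comm]

end Laplace

theorem stmt_3_general {ι : Type*} (l : ι → ℂ)
    (Θ : Kspace →L[ℂ] Kspace)
    (hΘ : ∀ (f : Kspace) (z : ℂ), 0 < z.re →
      Laplace (Θ f) z = (∏' k, (z + (starRingEnd ℂ) (l k)) / (z - l k)) * Laplace f z)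
    (μ : ℂ) (hμ : μ.re < 0) (t : ℝ) (ht : 0 ≤ t)
    (f : Kspace)
    (hf : (f : ℝ → ℂ) =ᵐ[mu0] fun x => if t < x then Complex.exp (μ * x) else 0) :
    ⟪f, Θ f⟫ =
      (∏' k, ((-(starRingEnd ℂ) μ) + (starRingEnd ℂ) (l k)) / ((-(starRingEnd ℂ) μ) - l k)) *
        (‖f‖ : ℂ) ^ 2 ∧
    ‖f‖ ^ 2 = Real.exp (2 * t * μ.re) / (-2 * μ.re) := by
  set e : Kspace := (memLp_cexp_mul hμ).toLp
  set c := Complex.exp (μ * t)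
  have hce : (c • e : Kspace) =ᵐ[mu0] fun x => c * Complex.exp (μ * x) :=
    (Lp.coeFn_smul c e).trans ((memLp_cexp_mul hμ).coeFn_toLp.const_smul c)
  have hf' : f = rightShift ht (c • e) := Lp.ext <| by
    filter_upwards [hf, rightShift_ae_eq ht hce] with x hfx hsx
    rw [hfx, hsx]
    by_cases hxt : t < x
    · rw [if_pos hxt, indicator_of_mem (mem_Ioi.2 hxt), ← Complex.exp_add]
      push_cast
      ring_nf
    · rw [if_neg hxt, indicator_of_notMem (notMem_Ioi.2 (not_lt.1 hxt))]
  have hΘf : Θ f = rightShift ht (Θ (c • e)) := hf' ▸ map_rightShift_of_laplace_eq_mul hΘ ht _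
  have hz : 0 < (-starRingEnd ℂ μ).re := by simpa using hμ
  have hv : ∀ u, ⟪c • e, u⟫ = starRingEnd ℂ c * Laplace u (-starRingEnd ℂ μ) := fun u => by
    rw [inner_smul_left, inner_toLp_cexp_mul hμ]
  constructor
  · have hff : (‖f‖ : ℂ) ^ 2 = ⟪f, f⟫ := (inner_self_eq_norm_sq_to_K f).symm
    rw [hff, hΘf, hf', inner_rightShift, inner_rightShift]
    exact inner_map_eq_mul_inner_self hΘ hz hv
  · rw [hf', norm_rightShift, norm_smul, mul_pow, norm_toLp_cexp_mul_sq hμ, Complex.norm_exp,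
      Complex.re_mul_ofReal, sq, ← Real.exp_add]
    ring_nf

/-- let `Θ` be the isometry of `K = L²(0,∞)` determined by
`L(Θf)(λ) = B(λ)·(Lf)(λ)` for `Re λ > 0`, where `B` is the Blaschke product of a
family `(λ_k)` satisfying condition (1).  For `Re μ < 0`, `t ≥ 0` and `f` the
truncated exponential `f(x) = e^{μx}` for `x > t`, `f(x) = 0` for `0 < x < t`, one has
`⟨Θf, f⟩ = B(-conj μ)·‖f‖²` (inner product linear in the first argument, i.e.
`⟨u,v⟩ = ∫ u·conj v`) and `‖f‖² = e^{2t·Re μ}/(-2 Re μ)`. -/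
theorem stmt_3 {ι : Type*} [Countable ι] (l : ι → ℂ)
    (h1 : ∀ k, (l k).re < 0)
    (h2 : Summable fun k => |(l k).re|)
    (h3 : ∃ R > (0:ℝ), ∀ k, |(l k).im| < R)
    (Θ : Kspace →L[ℂ] Kspace)
    (hΘiso : ∀ f : Kspace, ‖Θ f‖ = ‖f‖)
    (hΘ : ∀ (f : Kspace) (z : ℂ), 0 < z.re →
      Laplace (Θ f) z = (∏' k, (z + (starRingEnd ℂ) (l k)) / (z - l k)) * Laplace f z)
    (μ : ℂ) (hμ : μ.re < 0) (t : ℝ) (ht : 0 ≤ t)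
    (f : Kspace)
    (hf : (f : ℝ → ℂ) =ᵐ[mu0] fun x => if t < x then Complex.exp (μ * x) else 0) :
    ⟪f, Θ f⟫ =
      (∏' k, ((-(starRingEnd ℂ) μ) + (starRingEnd ℂ) (l k)) / ((-(starRingEnd ℂ) μ) - l k)) *
        (‖f‖ : ℂ) ^ 2 ∧
    ‖f‖ ^ 2 = Real.exp (2 * t * μ.re) / (-2 * μ.re) :=
  stmt_3_general l Θ hΘ μ hμ t ht f hf
end
end

section
/- For every t > 0 and every n, ‖P_{[t,∞)}(V_t g_n) − S_t g_n‖² ≤ 2·(1 − e^{t·Re λ_n}). -/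
/-!
The adjoint `S_t^*` is the backward shift, so every `f_k` is an eigenvector of `S_t^*` with
eigenvalue `e^{λ_k t}`. Modulo the span of the `f_k` with `k < n`, which is `S_t^*`-invariant and
orthogonal to `g_n`, the vector `g_n` is a multiple of `f_n`; this gives
`⟨g_n, S_t g_n⟩ = conj (e^{λ_n t})`.
As `S_t g_n` vanishes on `(0, t)`, cutting `V_t g_n = e^{-i t Im λ_n} g_n` off to `[t, ∞)` does not
change its inner product with `S_t g_n`, which is therefore the real number `e^{t Re λ_n}`.
Expanding the square with `‖P_{[t,∞)} V_t g_n‖ ≤ 1 = ‖S_t g_n‖` gives the bound.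
-/

open MeasureTheory

noncomputable section

/-- The squared Hilbert–Schmidt norm of a bounded operator on an inner product space,
as the supremum over finite orthonormal families `(e_x)_{x ∈ s}` of `∑ ‖T e_x‖²`
(this equals `∑_n ‖T e_n‖²` for any orthonormal basis `(e_n)`). -/
def hsNormSq {H : Type*} [NormedAddCommGroup H] [InnerProductSpace ℂ H]
    (T : H →L[ℂ] H) : ENNReal :=
  ⨆ (s : Finset H) (_ : Orthonormal ℂ (fun x : s => (x : H))),
    ∑ x ∈ s, ENNReal.ofReal (‖T x‖ ^ 2)

/-- A bounded operator is Hilbert–Schmidt (`T ∈ s₂`) if `∑_n ‖T e_n‖² < ∞` for an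
orthonormal basis. -/
def IsHilbertSchmidt {H : Type*} [NormedAddCommGroup H] [InnerProductSpace ℂ H]
    (T : H →L[ℂ] H) : Prop := hsNormSq T < ⊤

/-- The Hilbert–Schmidt norm `‖T‖₂ = (∑_n ‖T e_n‖²)^{1/2}`. -/
def hsNorm {H : Type*} [NormedAddCommGroup H] [InnerProductSpace ℂ H]
    (T : H →L[ℂ] H) : ℝ := Real.sqrt (hsNormSq T).toReal

open InnerProductSpace
open scoped ComplexConjugate

section GramSchmidt

variable {𝕜 E ι : Type*} [RCLike 𝕜] [NormedAddCommGroup E] [InnerProductSpace 𝕜 E]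
  [LinearOrder ι] [LocallyFiniteOrderBot ι] [WellFoundedLT ι]

open Submodule

theorem inner_gramSchmidt_map_of_eigenvectors (f : ι → E) (T : E →ₗ[𝕜] E) {μ : ι → 𝕜}
    (hT : ∀ k, T (f k) = μ k • f k) (n : ι) :
    ⟪gramSchmidt 𝕜 f n, T (gramSchmidt 𝕜 f n)⟫_𝕜 =
      μ n * ⟪gramSchmidt 𝕜 f n, gramSchmidt 𝕜 f n⟫_𝕜 := by
  set W := span 𝕜 (f '' Set.Iio n)
  set g := gramSchmidt 𝕜 f n with hg
  have hW_invariant : W ≤ W.comap T := by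
    rw [span_le]
    rintro - ⟨k, hk, rfl⟩
    simpa [hT k] using smul_mem W (μ k) (subset_span ⟨k, hk, rfl⟩)
  have hW_orthogonal : W ≤ (𝕜 ∙ g)ᗮ := by
    rw [span_le]
    rintro - ⟨k, hk, rfl⟩
    exact mem_orthogonal_singleton_iff_inner_right.2
      (gramSchmidt_inv_triangular 𝕜 f hk)
  have hg_sub : g - f n ∈ W := by
    rw [show W = span 𝕜 (gramSchmidt 𝕜 f '' Set.Iio n) from (span_gramSchmidt_Iio 𝕜 f n).symm,
      hg, gramSchmidt_def 𝕜 f n, sub_sub_cancel_left, neg_mem_iff]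
    simp_rw [starProjection_singleton]
    exact sum_mem fun i hi =>
      smul_mem _ _ (subset_span (Set.mem_image_of_mem _ (Finset.mem_Iio.1 hi)))
  have hmem : T g - μ n • g ∈ W := by
    have : T g - μ n • g = T (g - f n) - μ n • (g - f n) := by
      rw [map_sub, hT n, smul_sub]; abel
    rw [this]
    exact sub_mem (hW_invariant hg_sub) (smul_mem W _ hg_sub)
  have := mem_orthogonal_singleton_iff_inner_right.1 (hW_orthogonal hmem)
  rwa [inner_sub_right, inner_smul_right, sub_eq_zero] at this

theorem inner_gramSchmidtNormed_map_of_eigenvectors (f : ι → E) (T : E →ₗ[𝕜] E) {μ : ι → 𝕜}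
    (hT : ∀ k, T (f k) = μ k • f k) (n : ι) :
    ⟪gramSchmidtNormed 𝕜 f n, T (gramSchmidtNormed 𝕜 f n)⟫_𝕜 =
      μ n * ⟪gramSchmidtNormed 𝕜 f n, gramSchmidtNormed 𝕜 f n⟫_𝕜 := by
  simp only [gramSchmidtNormed, map_smul, inner_smul_left, inner_smul_right,
    inner_gramSchmidt_map_of_eigenvectors f T hT n]
  ring

end GramSchmidt

theorem norm_sub_sq_le_two_mul_one_sub_re_inner {𝕜 E : Type*} [RCLike 𝕜] [NormedAddCommGroup E]
    [InnerProductSpace 𝕜 E] {u v : E} (hu : ‖u‖ ≤ 1) (hv : ‖v‖ ≤ 1) :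
    ‖u - v‖ ^ 2 ≤ 2 * (1 - RCLike.re ⟪u, v⟫_𝕜) := by
  rw [@norm_sub_sq 𝕜]
  nlinarith [norm_nonneg u, norm_nonneg v]

theorem integral_mu0_ite_sub {t : ℝ} (ht : 0 ≤ t) (φ : ℝ → ℂ) :
    ∫ x, (if t < x then φ (x - t) else 0) ∂mu0 = ∫ y, φ y ∂mu0 := by
  have hpre : (fun x : ℝ => x - t) ⁻¹' Set.Ioi 0 = Set.Ioi t := by
    ext x; simp
  calc ∫ x, (if t < x then φ (x - t) else 0) ∂mu0
      = ∫ x in Set.Ioi 0, (Set.Ioi t).indicator (fun x => φ (x - t)) x := by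
        simp only [mu0, Set.indicator, Set.mem_Ioi]
    _ = ∫ x in Set.Ioi t, φ (x - t) := by
        rw [setIntegral_indicator measurableSet_Ioi, Set.Ioi_inter_Ioi, max_eq_right ht]
    _ = ∫ y, φ y ∂mu0 := by
        rw [← hpre, mu0]
        exact (measurePreserving_sub_right volume t).setIntegral_preimage_emb
          (measurableEmbedding_subRight t) _ _

theorem Kspace.inner_eq_integral (u v : Kspace) : ⟪u, v⟫_ℂ = ∫ y, conj (u y) * v y ∂mu0 := by
  simp only [L2.inner_def, RCLike.inner_apply, mul_comm]

theorem Complex.exp_neg_I_mul_im_mul_exp (z : ℂ) (t : ℝ) :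
    Complex.exp (-Complex.I * t * z.im) * Complex.exp (z * t) = Real.exp (t * z.re) := by
  rw [← Complex.exp_add, Complex.ofReal_exp]
  congr 1
  apply Complex.ext <;> simp <;> ring

section Shift

variable {t : ℝ} {S : Kspace →L[ℂ] Kspace}

theorem inner_shift_right_eq_integral (ht : 0 ≤ t)
    (hS : ∀ f : Kspace, (S f : ℝ → ℂ) =ᵐ[mu0] fun x => if t < x then f (x - t) else 0)
    {u : Kspace} {ψ : ℝ → ℂ} (hu : ∀ᵐ x ∂mu0, t < x → u x = ψ (x - t)) (w : Kspace) :
    ⟪u, S w⟫_ℂ = ∫ y, conj (ψ y) * w y ∂mu0 := by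
  rw [Kspace.inner_eq_integral]
  refine (integral_congr_ae ?_).trans (integral_mu0_ite_sub ht _)
  filter_upwards [hS w, hu] with x hSx hux
  rw [hSx]
  split_ifs with hx
  · rw [hux hx]
  · rw [mul_zero]

theorem norm_shift (ht : 0 ≤ t)
    (hS : ∀ f : Kspace, (S f : ℝ → ℂ) =ᵐ[mu0] fun x => if t < x then f (x - t) else 0)
    (u : Kspace) : ‖S u‖ = ‖u‖ := by
  have hinner : ⟪S u, S u⟫_ℂ = ⟪u, u⟫_ℂ := by
    rw [inner_shift_right_eq_integral ht hS (ψ := u)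
      ((hS u).mono fun x hx hxt => hx.trans (if_pos hxt)), Kspace.inner_eq_integral]
  rw [@norm_eq_sqrt_re_inner ℂ, @norm_eq_sqrt_re_inner ℂ, hinner]

theorem adjoint_shift_apply_of_ae_eq_exp (ht : 0 ≤ t)
    (hS : ∀ f : Kspace, (S f : ℝ → ℂ) =ᵐ[mu0] fun x => if t < x then f (x - t) else 0)
    {F : Kspace} {c z : ℂ} (hF : (F : ℝ → ℂ) =ᵐ[mu0] fun x => c * Complex.exp (z * x)) :
    S.adjoint F = Complex.exp (z * t) • F := by
  refine ext_inner_right ℂ fun w => ?_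
  have hF_shift : ∀ᵐ x ∂mu0, t < x →
      F x = Complex.exp (z * t) * (c * Complex.exp (z * ↑(x - t))) := by
    filter_upwards [hF] with x hx _
    rw [hx, mul_left_comm, ← Complex.exp_add]
    push_cast
    ring_nf
  rw [ContinuousLinearMap.adjoint_inner_left, inner_shift_right_eq_integral ht hS
      (ψ := fun y => Complex.exp (z * t) * (c * Complex.exp (z * y))) hF_shift,
    inner_smul_left, Kspace.inner_eq_integral, ← integral_const_mul]
  refine integral_congr_ae ?_
  filter_upwards [hF] with y hy
  rw [hy, map_mul, mul_assoc]

end Shift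

theorem norm_cutoff_le {t : ℝ} {u v : Kspace}
    (hv : (v : ℝ → ℂ) =ᵐ[mu0] fun x => if t ≤ x then u x else 0) : ‖v‖ ≤ ‖u‖ := by
  rw [Lp.norm_def, Lp.norm_def]
  refine ENNReal.toReal_mono (Lp.eLpNorm_ne_top u) (eLpNorm_mono_ae ?_)
  filter_upwards [hv] with x hx
  rw [hx]
  split_ifs <;> simp

theorem inner_cutoff_left_shift {t : ℝ} {u v w Sw : Kspace}
    (hv : (v : ℝ → ℂ) =ᵐ[mu0] fun x => if t ≤ x then u x else 0)
    (hSw : (Sw : ℝ → ℂ) =ᵐ[mu0] fun x => if t < x then w (x - t) else 0) :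
    ⟪v, Sw⟫_ℂ = ⟪u, Sw⟫_ℂ := by
  rw [Kspace.inner_eq_integral, Kspace.inner_eq_integral]
  refine integral_congr_ae ?_
  filter_upwards [hv, hSw] with x hvx hSwx
  rw [hvx, hSwx]
  by_cases hx : t < x
  · rw [if_pos hx.le]
  · simp [hx]

theorem stmt_9_general {ι : Type*} [LinearOrder ι] [LocallyFiniteOrderBot ι] [WellFoundedLT ι]
    (l : ι → ℂ)
    (h1 : ∀ n, (l n).re < 0)
    (F : ι → Kspace)
    (hF : ∀ n, (F n : ℝ → ℂ) =ᵐ[mu0]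
      fun x => (Real.sqrt (-2 * (l n).re) : ℂ) * Complex.exp (l n * x))
    (S : ℝ → Kspace →L[ℂ] Kspace)
    (hS : ∀ t ≥ (0:ℝ), ∀ f : Kspace,
      (S t f : ℝ → ℂ) =ᵐ[mu0] fun x => if t < x then f (x - t) else 0)
    (Pinf : ℝ → Kspace →L[ℂ] Kspace)
    (hPinf : ∀ (t : ℝ) (f : Kspace),
      (Pinf t f : ℝ → ℂ) =ᵐ[mu0] fun x => if t ≤ x then f x else 0)
    (V : ℝ → Kspace →L[ℂ] Kspace)
    (hVg : ∀ t ≥ (0:ℝ), ∀ n, V t (InnerProductSpace.gramSchmidtNormed ℂ F n) =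
      Complex.exp (-Complex.I * t * (l n).im) • InnerProductSpace.gramSchmidtNormed ℂ F n) :
    ∀ t > (0:ℝ), ∀ n,
      ‖Pinf t (V t (InnerProductSpace.gramSchmidtNormed ℂ F n)) - S t (InnerProductSpace.gramSchmidtNormed ℂ F n)‖ ^ 2
        ≤ 2 * (1 - Real.exp (t * (l n).re)) := by
  intro t ht n
  set g := gramSchmidtNormed ℂ F n
  rcases eq_or_ne g 0 with hg | hg
  · have := Real.exp_le_one_iff.2 (mul_nonpos_of_nonneg_of_nonpos ht.le (h1 n).le)
    simp only [hg, map_zero, sub_zero, norm_zero]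
    linarith
  have hg_norm : ‖g‖ = 1 := gramSchmidtNormed_unit_length' hg
  have hgSg : ⟪g, S t g⟫_ℂ = conj (Complex.exp (l n * t)) := by
    have heigen : ⟪g, (S t).adjoint g⟫_ℂ = Complex.exp (l n * t) * ⟪g, g⟫_ℂ :=
      inner_gramSchmidtNormed_map_of_eigenvectors F ((S t).adjoint : Kspace →ₗ[ℂ] Kspace)
        (fun k => adjoint_shift_apply_of_ae_eq_exp ht.le (hS t ht.le) (hF k)) n
    rw [← ContinuousLinearMap.adjoint_inner_left, ← inner_conj_symm, heigen,
      inner_self_eq_norm_sq_to_K, hg_norm]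
    simp
  have hcross : ⟪Pinf t (V t g), S t g⟫_ℂ = Real.exp (t * (l n).re) := by
    rw [inner_cutoff_left_shift (hPinf t _) (hS t ht.le g), hVg t ht.le n, inner_smul_left,
      hgSg, ← map_mul, Complex.exp_neg_I_mul_im_mul_exp, Complex.conj_ofReal]
  have hPVg : ‖Pinf t (V t g)‖ ≤ 1 := by
    refine (norm_cutoff_le (hPinf t _)).trans ?_
    rw [hVg t ht.le n, norm_smul, hg_norm, mul_one, Complex.norm_exp]
    simp
  calc _ ≤ 2 * (1 - RCLike.re ⟪Pinf t (V t g), S t g⟫_ℂ) :=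
        norm_sub_sq_le_two_mul_one_sub_re_inner hPVg
          ((norm_shift ht.le (hS t ht.le) g).trans hg_norm).le
    _ = 2 * (1 - Real.exp (t * (l n).re)) := by
        rw [hcross, RCLike.re_to_complex, Complex.ofReal_re]

/-- in the construction of the theorem (pairwise distinct `λ_n`
satisfying condition (1), `f_n(x) = (-2 Re λ_n)^{1/2} e^{λ_n x}`, `g_n` their
Gram–Schmidt orthonormalization, `K₀ = (span{f_n})^⊥`, `V_t h = S_t h` on `K₀`,
`V_t g_n = e^{-i t Im λ_n} g_n`): for every `t > 0` and every `n`,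
`‖P_{[t,∞)}(V_t g_n) - S_t g_n‖² ≤ 2·(1 - e^{t·Re λ_n})`. -/
theorem stmt_9 {ι : Type*} [LinearOrder ι] [LocallyFiniteOrderBot ι] [WellFoundedLT ι]
    [Countable ι] (l : ι → ℂ)
    (h1 : ∀ n, (l n).re < 0)
    (h2 : Summable fun n => |(l n).re|)
    (h3 : ∃ R > (0:ℝ), ∀ n, |(l n).im| < R)
    (hdist : Function.Injective l)
    (F : ι → Kspace)
    (hF : ∀ n, (F n : ℝ → ℂ) =ᵐ[mu0]
      fun x => (Real.sqrt (-2 * (l n).re) : ℂ) * Complex.exp (l n * x))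
    (S : ℝ → Kspace →L[ℂ] Kspace)
    (hS : ∀ t ≥ (0:ℝ), ∀ f : Kspace,
      (S t f : ℝ → ℂ) =ᵐ[mu0] fun x => if t < x then f (x - t) else 0)
    (Pinf : ℝ → Kspace →L[ℂ] Kspace)
    (hPinf : ∀ (t : ℝ) (f : Kspace),
      (Pinf t f : ℝ → ℂ) =ᵐ[mu0] fun x => if t ≤ x then f x else 0)
    (V : ℝ → Kspace →L[ℂ] Kspace)
    (hV₀ : ∀ t ≥ (0:ℝ), ∀ h ∈ (Submodule.span ℂ (Set.range F))ᗮ, V t h = S t h)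
    (hVg : ∀ t ≥ (0:ℝ), ∀ n, V t (InnerProductSpace.gramSchmidtNormed ℂ F n) =
      Complex.exp (-Complex.I * t * (l n).im) • InnerProductSpace.gramSchmidtNormed ℂ F n) :
    ∀ t > (0:ℝ), ∀ n,
      ‖Pinf t (V t (InnerProductSpace.gramSchmidtNormed ℂ F n)) - S t (InnerProductSpace.gramSchmidtNormed ℂ F n)‖ ^ 2
        ≤ 2 * (1 - Real.exp (t * (l n).re)) :=
  stmt_9_general l h1 F hF S hS Pinf hPinf V hVg
end
end

section
/- For every unit vector g ∈ K and every t > 0, ‖P_{[0,t]} g‖² ≤ 1 − |⟨S_t^* g, g⟩|². In particular, for the vectors g_n of the construction, ‖P_{[0,t]} g_n‖² ≤ 1 − e^{2t·Re λ_n}. -/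
open MeasureTheory ComplexInnerProductSpace

noncomputable section

/-
The range of `S_t` consists of functions vanishing on `[0,t]`, so it is orthogonal to the range
of `P_{[0,t]}`. Writing `g = P_{[0,t]} g + q`, the pairing `⟨S_t g, g⟩ = ⟨S_t g, q⟩` is bounded by
`‖q‖ = (1 - ‖P_{[0,t]} g‖²)^{1/2}` because `S_t` is an isometry. For the Gram–Schmidt vectors,
`f_k` is an eigenvector of `S_t^*` with eigenvalue `e^{conj λ_k t}`, and `g_n` lies in the span of
`f_0, …, f_n` while being orthogonal to `f_0, …, f_{n-1}`; hence `⟨S_t g_n, g_n⟩ = e^{λ_n t}`.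
-/

open InnerProductSpace

section

variable {𝕜 E : Type*} [RCLike 𝕜] [NormedAddCommGroup E] [InnerProductSpace 𝕜 E]

theorem norm_sq_le_one_sub_norm_inner_sq {g p v : E} (hg : ‖g‖ = 1) (hp : inner 𝕜 p (g - p) = 0)
    (hvp : inner 𝕜 v p = 0) (hv : ‖v‖ ≤ 1) :
    ‖p‖ ^ 2 ≤ 1 - ‖inner 𝕜 v g‖ ^ 2 := by
  have hpyth : ‖g‖ ^ 2 = ‖p‖ ^ 2 + ‖g - p‖ ^ 2 := by
    simpa [sq] using norm_add_sq_eq_norm_sq_add_norm_sq_of_inner_eq_zero p (g - p) hp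
  have hbound : ‖inner 𝕜 v g‖ ≤ ‖g - p‖ :=
    calc ‖inner 𝕜 v g‖ = ‖inner 𝕜 v (g - p)‖ := by rw [inner_sub_right, hvp, sub_zero]
      _ ≤ ‖v‖ * ‖g - p‖ := norm_inner_le_norm _ _
      _ ≤ ‖g - p‖ := mul_le_of_le_one_left (norm_nonneg _) hv
  rw [hg] at hpyth
  nlinarith [norm_nonneg (inner 𝕜 v g)]

theorem inner_map_gramSchmidtNormed_self {ι : Type*} [LinearOrder ι] [LocallyFiniteOrderBot ι]
    [WellFoundedLT ι] (A : E →ₗ[𝕜] E) (f : ι → E) (c : ι → 𝕜)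
    (hf : ∀ k x, inner 𝕜 (A x) (f k) = c k * inner 𝕜 x (f k)) (n : ι) :
    inner 𝕜 (A (gramSchmidtNormed 𝕜 f n)) (gramSchmidtNormed 𝕜 f n)
      = c n * inner 𝕜 (gramSchmidtNormed 𝕜 f n) (gramSchmidtNormed 𝕜 f n) := by
  set u := gramSchmidtNormed 𝕜 f n
  have hmem : u ∈ Submodule.span 𝕜 (f '' Set.Iic n) :=
    Submodule.smul_mem _ _ (gramSchmidt_mem_span 𝕜 f le_rfl)
  have horth : ∀ k < n, inner 𝕜 u (f k) = 0 := fun k hk => by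
    simp only [u, gramSchmidtNormed, inner_smul_left, gramSchmidt_inv_triangular 𝕜 f hk, mul_zero]
  refine LinearMap.eqOn_span (f := (innerSL 𝕜 (A u) : E →ₗ[𝕜] 𝕜))
    (g := c n • (innerSL 𝕜 u : E →ₗ[𝕜] 𝕜)) ?_ hmem
  rintro _ ⟨k, hk, rfl⟩
  rcases (Set.mem_Iic.1 hk).lt_or_eq with hlt | rfl
  · simp [hf, horth k hlt]
  · simp [hf]

end

def IsRightShift (t : ℝ) (S : Kspace →L[ℂ] Kspace) : Prop :=
  ∀ f : Kspace, (S f : ℝ → ℂ) =ᵐ[mu0] fun x => if t < x then f (x - t) else 0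

def IsRestriction (a b : ℝ) (P : Kspace →L[ℂ] Kspace) : Prop :=
  ∀ f : Kspace, (P f : ℝ → ℂ) =ᵐ[mu0] fun x => if x ∈ Set.Icc a b then f x else 0

theorem inner_Kspace (f g : Kspace) : ⟪f, g⟫ = ∫ x, (starRingEnd ℂ) (f x) * g x ∂mu0 := by
  rw [L2.inner_def]
  exact integral_congr_ae (Filter.Eventually.of_forall fun x => by simp [RCLike.inner_apply]; ring)

theorem integral_shift_mu0 {t : ℝ} (ht : 0 ≤ t) (φ : ℝ → ℂ) :
    ∫ x, (if t < x then φ (x - t) else 0) ∂mu0 = ∫ x, φ x ∂mu0 := by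
  rw [mu0, ← integral_indicator measurableSet_Ioi, ← integral_indicator measurableSet_Ioi]
  have hind : (Set.Ioi (0:ℝ)).indicator (fun x => if t < x then φ (x - t) else 0)
      = fun x => (Set.Ioi (0:ℝ)).indicator φ (x - t) := by
    funext x
    by_cases hx : t < x
    · simp [Set.indicator, hx, ht.trans_lt hx]
    · simp [Set.indicator, hx]
  rw [hind, integral_sub_right_eq_self]

theorem norm_apply_of_isRightShift {t : ℝ} (ht : 0 ≤ t) {S : Kspace →L[ℂ] Kspace}
    (hS : IsRightShift t S) (f : Kspace) : ‖S f‖ = ‖f‖ := by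
  have hin : ⟪S f, S f⟫ = ⟪f, f⟫ := by
    rw [inner_Kspace, inner_Kspace, ← integral_shift_mu0 ht fun y => (starRingEnd ℂ) (f y) * f y]
    refine integral_congr_ae ?_
    filter_upwards [hS f] with x hx
    by_cases hxt : t < x <;> simp [hx, hxt]
  rw [inner_self_eq_norm_sq_to_K, inner_self_eq_norm_sq_to_K] at hin
  exact (sq_eq_sq₀ (norm_nonneg _) (norm_nonneg _)).1 (by exact_mod_cast hin)

theorem inner_apply_sub_apply_of_isRestriction {a b : ℝ} {P : Kspace →L[ℂ] Kspace}
    (hP : IsRestriction a b P) (f : Kspace) : ⟪P f, f - P f⟫ = 0 := by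
  rw [inner_Kspace, ← integral_zero ℝ ℂ]
  refine integral_congr_ae ?_
  filter_upwards [hP f, Lp.coeFn_sub f (P f)] with x hPx hsub
  rw [hsub, Pi.sub_apply, hPx]
  split_ifs <;> simp

theorem inner_isRightShift_isRestriction_eq_zero {a t : ℝ} {S P : Kspace →L[ℂ] Kspace}
    (hS : IsRightShift t S) (hP : IsRestriction a t P) (f g : Kspace) : ⟪S f, P g⟫ = 0 := by
  rw [inner_Kspace, ← integral_zero ℝ ℂ]
  refine integral_congr_ae ?_
  filter_upwards [hS f, hP g] with x hSx hPx
  by_cases hx : x ∈ Set.Icc a t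
  · simp [hSx, hPx, hx, not_lt.2 hx.2]
  · simp [hPx, hx]

theorem inner_isRightShift_exp {t : ℝ} (ht : 0 ≤ t) {S : Kspace →L[ℂ] Kspace}
    (hS : IsRightShift t S) {F : Kspace} {c lam : ℂ}
    (hF : (F : ℝ → ℂ) =ᵐ[mu0] fun x => c * Complex.exp (lam * x)) (h : Kspace) :
    ⟪S h, F⟫ = Complex.exp (lam * t) * ⟪h, F⟫ := by
  set φ : ℝ → ℂ := fun y => (starRingEnd ℂ) (h y) * (c * Complex.exp (lam * (y + t)))
  calc ⟪S h, F⟫ = ∫ x, (if t < x then φ (x - t) else 0) ∂mu0 := by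
        rw [inner_Kspace]
        refine integral_congr_ae ?_
        filter_upwards [hS h, hF] with x hSx hFx
        by_cases hx : t < x
        · simp [φ, hSx, hFx, hx]
        · simp [hSx, hx]
    _ = ∫ y, φ y ∂mu0 := integral_shift_mu0 ht φ
    _ = Complex.exp (lam * t) * ⟪h, F⟫ := by
        rw [inner_Kspace, ← integral_const_mul]
        refine integral_congr_ae ?_
        filter_upwards [hF] with y hFy
        simp only [φ, hFy, mul_add, Complex.exp_add]
        ring

theorem norm_sq_isRestriction_le_one_sub {t : ℝ} (ht : 0 ≤ t) {S P : Kspace →L[ℂ] Kspace}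
    (hS : IsRightShift t S) (hP : IsRestriction 0 t P) {g : Kspace} (hg : ‖g‖ = 1) :
    ‖P g‖ ^ 2 ≤ 1 - ‖⟪g, ContinuousLinearMap.adjoint S g⟫‖ ^ 2 := by
  rw [ContinuousLinearMap.adjoint_inner_right]
  exact norm_sq_le_one_sub_norm_inner_sq hg (inner_apply_sub_apply_of_isRestriction hP g)
    (inner_isRightShift_isRestriction_eq_zero hS hP g g)
    (norm_apply_of_isRightShift ht hS g ▸ hg.le)

theorem stmt_10_general {ι : Type*} [LinearOrder ι] [LocallyFiniteOrderBot ι] [WellFoundedLT ι]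
    (l : ι → ℂ)
    (h1 : ∀ n, (l n).re < 0)
    -- `F n` is the unit vector `f_n(x) = (-2 Re λ_n)^{1/2} e^{λ_n x}` in `K`:
    (F : ι → Kspace)
    (hF : ∀ n, (F n : ℝ → ℂ) =ᵐ[mu0]
      fun x => (Real.sqrt (-2 * (l n).re) : ℂ) * Complex.exp (l n * x))
    -- the right-shift semigroup `S` on `K`:
    (S : ℝ → Kspace →L[ℂ] Kspace)
    (hS : ∀ t ≥ (0:ℝ), ∀ f : Kspace,
      (S t f : ℝ → ℂ) =ᵐ[mu0] fun x => if t < x then f (x - t) else 0)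
    -- the projections `P_{[a,b]}`:
    (P : ℝ → ℝ → Kspace →L[ℂ] Kspace)
    (hP : ∀ (a b : ℝ) (f : Kspace),
      (P a b f : ℝ → ℂ) =ᵐ[mu0] fun x => if x ∈ Set.Icc a b then f x else 0) :
    (∀ g : Kspace, ‖g‖ = 1 → ∀ t > (0:ℝ),
      ‖P 0 t g‖ ^ 2 ≤ 1 - ‖⟪g, ContinuousLinearMap.adjoint (S t) g⟫‖ ^ 2) ∧
    (∀ n, ∀ t > (0:ℝ),
      ‖P 0 t (InnerProductSpace.gramSchmidtNormed ℂ F n)‖ ^ 2 ≤ 1 - Real.exp (2 * t * (l n).re)) := by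
  have hmain : ∀ g : Kspace, ‖g‖ = 1 → ∀ t > (0:ℝ),
      ‖P 0 t g‖ ^ 2 ≤ 1 - ‖⟪g, ContinuousLinearMap.adjoint (S t) g⟫‖ ^ 2 :=
    fun g hg t ht => norm_sq_isRestriction_le_one_sub ht.le (hS t ht.le) (hP 0 t) hg
  refine ⟨hmain, fun n t ht => ?_⟩
  set u := gramSchmidtNormed ℂ F n
  have hexp : Real.exp (2 * t * (l n).re) ≤ 1 :=
    Real.exp_le_one_iff.2 (by nlinarith [h1 n])
  by_cases hu : u = 0
  · simpa [hu] using hexp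
  have hu1 : ‖u‖ = 1 := gramSchmidtNormed_unit_length' hu
  have hinner : ⟪u, ContinuousLinearMap.adjoint (S t) u⟫ = Complex.exp (l n * t) := by
    have heig := inner_map_gramSchmidtNormed_self (S t : Kspace →ₗ[ℂ] Kspace) F
      (fun k => Complex.exp (l k * t)) (fun k => inner_isRightShift_exp ht.le (hS t ht.le) (hF k)) n
    rw [ContinuousLinearMap.adjoint_inner_right, ← mul_one (Complex.exp _),
      ← inner_self_eq_one_of_norm_eq_one (𝕜 := ℂ) hu1]
    exact heig
  have hnorm : ‖Complex.exp (l n * t)‖ ^ 2 = Real.exp (2 * t * (l n).re) := by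
    rw [Complex.norm_exp, ← Real.exp_nat_mul]
    congr 1
    simp only [Nat.cast_ofNat, Complex.mul_re, Complex.ofReal_re, Complex.ofReal_im, mul_zero,
      sub_zero]
    ring
  simpa [hinner, hnorm] using hmain u hu1 t ht

/-- for every unit vector `g ∈ K = L²(0,∞)` and every `t > 0`,
`‖P_{[0,t]} g‖² ≤ 1 - |⟨S_t^* g, g⟩|²`; in particular, for the Gram–Schmidt vectors
`g_n` of the construction, `‖P_{[0,t]} g_n‖² ≤ 1 - e^{2t·Re λ_n}`. -/
theorem stmt_10 {ι : Type*} [LinearOrder ι] [LocallyFiniteOrderBot ι] [WellFoundedLT ι]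
    [Countable ι] (l : ι → ℂ)
    (h1 : ∀ n, (l n).re < 0)
    (h2 : Summable fun n => |(l n).re|)
    (h3 : ∃ R > (0:ℝ), ∀ n, |(l n).im| < R)
    (hdist : Function.Injective l)
    -- `F n` is the unit vector `f_n(x) = (-2 Re λ_n)^{1/2} e^{λ_n x}` in `K`:
    (F : ι → Kspace)
    (hF : ∀ n, (F n : ℝ → ℂ) =ᵐ[mu0]
      fun x => (Real.sqrt (-2 * (l n).re) : ℂ) * Complex.exp (l n * x))
    -- the right-shift semigroup `S` on `K`:
    (S : ℝ → Kspace →L[ℂ] Kspace)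
    (hS : ∀ t ≥ (0:ℝ), ∀ f : Kspace,
      (S t f : ℝ → ℂ) =ᵐ[mu0] fun x => if t < x then f (x - t) else 0)
    -- the projections `P_{[a,b]}`:
    (P : ℝ → ℝ → Kspace →L[ℂ] Kspace)
    (hP : ∀ (a b : ℝ) (f : Kspace),
      (P a b f : ℝ → ℂ) =ᵐ[mu0] fun x => if x ∈ Set.Icc a b then f x else 0) :
    (∀ g : Kspace, ‖g‖ = 1 → ∀ t > (0:ℝ),
      ‖P 0 t g‖ ^ 2 ≤ 1 - ‖⟪g, ContinuousLinearMap.adjoint (S t) g⟫‖ ^ 2) ∧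
    (∀ n, ∀ t > (0:ℝ),
      ‖P 0 t (InnerProductSpace.gramSchmidtNormed ℂ F n)‖ ^ 2 ≤ 1 - Real.exp (2 * t * (l n).re)) :=
  stmt_10_general l h1 F hF S hS P hP
end
end

section
/- Let (V_t)_{t≥0} and (S_t)_{t≥0} be C₀-semigroups of isometries on a separable complex Hilbert space such that Δ_t := V_t − S_t is Hilbert–Schmidt for every t ≥ 0 and ‖Δ_δ‖₂ → 0 as δ → 0+. Then the map t ↦ Δ_t is right-continuous in the Hilbert–Schmidt norm: for every t ≥ 0, ‖Δ_{t+δ} − Δ_t‖₂ → 0 as δ → 0+. -/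
open Filter

noncomputable section

/-- A C₀-semigroup of isometries on a Hilbert space: `V 0 = I`, `V (s+t) = V s V t`,
each `V t` (`t ≥ 0`) is an isometry, and `t ↦ V t f` is continuous on `[0,∞)`. -/
structure IsIsometricC0Semigroup {K : Type*} [NormedAddCommGroup K]
    [InnerProductSpace ℂ K] (V : ℝ → K →L[ℂ] K) : Prop where
  isom : ∀ t ≥ (0:ℝ), ∀ f, ‖V t f‖ = ‖f‖
  map_zero : V 0 = 1
  map_add : ∀ s ≥ (0:ℝ), ∀ t ≥ (0:ℝ), V (s + t) = (V s).comp (V t)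
  strong_cont : ∀ f, ContinuousOn (fun t => V t f) (Set.Ici (0:ℝ))

/-!
Write `Δ t = V t - S t`. The semigroup law gives
`Δ (t + δ) - Δ t = (V δ - 1) Δ t + Δ δ S t`.
Since `S t` is an isometry, `‖Δ δ S t‖₂ ≤ ‖Δ δ‖₂ → 0`. For the other term, expand
`‖(V δ - 1) Δ t‖₂² = ∑ᵢ ‖(V δ - 1) Δ t eᵢ‖²` over a Hilbert basis `(eᵢ)`: each summand tends to `0`
by strong continuity of `V`, and is dominated by `4 ‖Δ t eᵢ‖²`, which is summable because
`Δ t` is Hilbert–Schmidt.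
-/

open scoped InnerProductSpace Topology

section HilbertSchmidt

variable {H : Type*} [NormedAddCommGroup H] [InnerProductSpace ℂ H]

theorem sum_le_hsNormSq (T : H →L[ℂ] H) {s : Finset H}
    (hs : Orthonormal ℂ (fun x : s => (x : H))) :
    ∑ x ∈ s, ENNReal.ofReal (‖T x‖ ^ 2) ≤ hsNormSq T :=
  le_iSup₂ (f := fun (u : Finset H) (_ : Orthonormal ℂ (fun x : u => (x : H))) =>
    ∑ x ∈ u, ENNReal.ofReal (‖T x‖ ^ 2)) s hs

theorem Orthonormal.sum_le_hsNormSq {ι : Type*} [Fintype ι] {v : ι → H}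
    (hv : Orthonormal ℂ v) (T : H →L[ℂ] H) :
    ∑ i, ENNReal.ofReal (‖T (v i)‖ ^ 2) ≤ hsNormSq T := by
  classical
  have hinj := hv.linearIndependent.injective
  have hrange : Orthonormal ℂ (fun x : Finset.univ.image v => (x : H)) := by
    have := (orthonormal_subtype_range hinj).2 hv
    rwa [← Set.image_univ, ← Finset.coe_univ, ← Finset.coe_image] at this
  calc ∑ i, ENNReal.ofReal (‖T (v i)‖ ^ 2)
      = ∑ x ∈ Finset.univ.image v, ENNReal.ofReal (‖T x‖ ^ 2) :=
        (Finset.sum_image (f := fun x => ENNReal.ofReal (‖T x‖ ^ 2))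
          fun i _ j _ h => hinj h).symm
    _ ≤ hsNormSq T := _root_.sum_le_hsNormSq T hrange

theorem hsNormSq_comp_le_of_isometry (T B : H →L[ℂ] H) (hB : ∀ f, ‖B f‖ = ‖f‖) :
    hsNormSq (T.comp B) ≤ hsNormSq T :=
  iSup₂_le fun s hs => calc
    ∑ x ∈ s, ENNReal.ofReal (‖T.comp B x‖ ^ 2) = ∑ x : s, ENNReal.ofReal (‖T (B x)‖ ^ 2) :=
      (Finset.sum_coe_sort s _).symm
    _ ≤ hsNormSq T := (hs.comp_linearIsometry ⟨(B : H →ₗ[ℂ] H), hB⟩).sum_le_hsNormSq T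

theorem hsNormSq_add_le (X Y : H →L[ℂ] H) :
    hsNormSq (X + Y) ≤ 2 * hsNormSq X + 2 * hsNormSq Y :=
  iSup₂_le fun s hs => calc
    ∑ x ∈ s, ENNReal.ofReal (‖(X + Y) x‖ ^ 2)
      ≤ ∑ x ∈ s, (2 * ENNReal.ofReal (‖X x‖ ^ 2) + 2 * ENNReal.ofReal (‖Y x‖ ^ 2)) := by
        refine Finset.sum_le_sum fun x _ => ?_
        rw [← ENNReal.ofReal_ofNat 2, ← ENNReal.ofReal_mul zero_le_two,
          ← ENNReal.ofReal_mul zero_le_two, ← ENNReal.ofReal_add (by positivity) (by positivity)]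
        refine ENNReal.ofReal_le_ofReal ?_
        calc ‖(X + Y) x‖ ^ 2 ≤ (‖X x‖ + ‖Y x‖) ^ 2 := by
              gcongr; exact norm_add_le _ _
          _ ≤ 2 * ‖X x‖ ^ 2 + 2 * ‖Y x‖ ^ 2 := by linarith [add_sq_le (a := ‖X x‖) (b := ‖Y x‖)]
    _ = 2 * ∑ x ∈ s, ENNReal.ofReal (‖X x‖ ^ 2) + 2 * ∑ x ∈ s, ENNReal.ofReal (‖Y x‖ ^ 2) := by
        rw [Finset.sum_add_distrib, Finset.mul_sum, Finset.mul_sum]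
    _ ≤ 2 * hsNormSq X + 2 * hsNormSq Y := by
        gcongr <;> exact sum_le_hsNormSq _ hs

theorem HilbertBasis.hasSum_norm_inner_sq {ι : Type*} (b : HilbertBasis ι ℂ H) (y : H) :
    HasSum (fun i => ‖⟪b i, y⟫_ℂ‖ ^ 2) (‖y‖ ^ 2) := by
  simpa [b.repr_apply_apply] using lp.hasSum_norm (p := 2) (by norm_num) (b.repr y)

theorem HilbertBasis.ofReal_norm_sq_eq_tsum {ι : Type*} (b : HilbertBasis ι ℂ H) (y : H) :
    ENNReal.ofReal (‖y‖ ^ 2) = ∑' i, ENNReal.ofReal (‖⟪b i, y⟫_ℂ‖ ^ 2) := by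
  rw [← (b.hasSum_norm_inner_sq y).tsum_eq,
    ENNReal.ofReal_tsum_of_nonneg (fun _ => by positivity) (b.hasSum_norm_inner_sq y).summable]

variable [CompleteSpace H] {ι : Type*}

open ContinuousLinearMap in
/-- Parseval in each `T x`, then Bessel for the vectors `T† (b i)`. -/
theorem HilbertBasis.hsNormSq_le_tsum_adjoint (b : HilbertBasis ι ℂ H) (T : H →L[ℂ] H) :
    hsNormSq T ≤ ∑' i, ENNReal.ofReal (‖adjoint T (b i)‖ ^ 2) :=
  iSup₂_le fun s hs => calc
    ∑ x ∈ s, ENNReal.ofReal (‖T x‖ ^ 2)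
      = ∑ x ∈ s, ∑' i, ENNReal.ofReal (‖⟪b i, T x⟫_ℂ‖ ^ 2) :=
        Finset.sum_congr rfl fun x _ => b.ofReal_norm_sq_eq_tsum (T x)
    _ = ∑' i, ∑ x ∈ s, ENNReal.ofReal (‖⟪b i, T x⟫_ℂ‖ ^ 2) :=
        (Summable.tsum_finsetSum fun _ _ => ENNReal.summable).symm
    _ ≤ ∑' i, ENNReal.ofReal (‖adjoint T (b i)‖ ^ 2) := by
        refine ENNReal.tsum_le_tsum fun i => ?_
        rw [← ENNReal.ofReal_sum_of_nonneg fun _ _ => by positivity]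
        refine ENNReal.ofReal_le_ofReal ?_
        calc ∑ x ∈ s, ‖⟪b i, T x⟫_ℂ‖ ^ 2 = ∑ x : s, ‖⟪(x : H), adjoint T (b i)⟫_ℂ‖ ^ 2 := by
              rw [← Finset.sum_coe_sort s]
              refine Finset.sum_congr rfl fun x _ => ?_
              rw [adjoint_inner_right, norm_inner_symm]
          _ ≤ ‖adjoint T (b i)‖ ^ 2 := hs.sum_inner_products_le _

open ContinuousLinearMap in
theorem HilbertBasis.tsum_norm_adjoint_sq (b : HilbertBasis ι ℂ H) (T : H →L[ℂ] H) :
    ∑' i, ENNReal.ofReal (‖adjoint T (b i)‖ ^ 2) = ∑' i, ENNReal.ofReal (‖T (b i)‖ ^ 2) := calc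
  ∑' i, ENNReal.ofReal (‖adjoint T (b i)‖ ^ 2)
      = ∑' i, ∑' j, ENNReal.ofReal (‖⟪b i, T (b j)⟫_ℂ‖ ^ 2) := by
        refine tsum_congr fun i => (b.ofReal_norm_sq_eq_tsum _).trans (tsum_congr fun j => ?_)
        rw [adjoint_inner_right, norm_inner_symm]
    _ = ∑' j, ∑' i, ENNReal.ofReal (‖⟪b i, T (b j)⟫_ℂ‖ ^ 2) := ENNReal.tsum_comm
    _ = ∑' j, ENNReal.ofReal (‖T (b j)‖ ^ 2) :=
        tsum_congr fun j => (b.ofReal_norm_sq_eq_tsum _).symm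

theorem HilbertBasis.hsNormSq_eq_tsum (b : HilbertBasis ι ℂ H) (T : H →L[ℂ] H) :
    hsNormSq T = ∑' i, ENNReal.ofReal (‖T (b i)‖ ^ 2) := by
  refine le_antisymm ((b.hsNormSq_le_tsum_adjoint T).trans (b.tsum_norm_adjoint_sq T).le) ?_
  rw [ENNReal.tsum_eq_iSup_sum]
  refine iSup_le fun s => ?_
  rw [← Finset.sum_coe_sort s]
  exact (b.orthonormal.comp _ Subtype.val_injective).sum_le_hsNormSq T

end HilbertSchmidt

section Convergence

variable {H : Type*} [NormedAddCommGroup H] [InnerProductSpace ℂ H] {α : Type*} {l : Filter α}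

theorem tendsto_hsNorm_of_tendsto_hsNormSq {T : α → H →L[ℂ] H}
    (h : Tendsto (fun a => hsNormSq (T a)) l (𝓝 0)) :
    Tendsto (fun a => hsNorm (T a)) l (𝓝 0) := by
  simpa [hsNorm, Function.comp_def] using
    (Real.continuous_sqrt.tendsto 0).comp ((ENNReal.tendsto_toReal ENNReal.zero_ne_top).comp h)

theorem tendsto_hsNormSq_of_tendsto_hsNorm {T : α → H →L[ℂ] H}
    (hT : ∀ᶠ a in l, IsHilbertSchmidt (T a)) (h : Tendsto (fun a => hsNorm (T a)) l (𝓝 0)) :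
    Tendsto (fun a => hsNormSq (T a)) l (𝓝 0) := by
  have hsq : Tendsto (fun a => hsNorm (T a) ^ 2) l (𝓝 0) := by simpa using h.pow 2
  have hofReal : Tendsto (fun a => ENNReal.ofReal (hsNorm (T a) ^ 2)) l (𝓝 0) := by
    simpa [Function.comp_def] using (ENNReal.continuous_ofReal.tendsto 0).comp hsq
  refine hofReal.congr' (hT.mono fun a ha => ?_)
  rw [hsNorm, Real.sq_sqrt ENNReal.toReal_nonneg, ENNReal.ofReal_toReal ha.ne]

theorem tendsto_hsNormSq_add {X Y : α → H →L[ℂ] H}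
    (hX : Tendsto (fun a => hsNormSq (X a)) l (𝓝 0))
    (hY : Tendsto (fun a => hsNormSq (Y a)) l (𝓝 0)) :
    Tendsto (fun a => hsNormSq (X a + Y a)) l (𝓝 0) := by
  have hbound : Tendsto (fun a => 2 * hsNormSq (X a) + 2 * hsNormSq (Y a)) l (𝓝 0) := by
    simpa using (ENNReal.Tendsto.const_mul hX (by simp)).add
      (ENNReal.Tendsto.const_mul hY (by simp))
  exact tendsto_of_tendsto_of_tendsto_of_le_of_le tendsto_const_nhds hbound
    (fun _ => zero_le) fun _ => hsNormSq_add_le _ _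

theorem tendsto_hsNormSq_comp_of_isometry {X : α → H →L[ℂ] H} (B : H →L[ℂ] H)
    (hB : ∀ f, ‖B f‖ = ‖f‖) (hX : Tendsto (fun a => hsNormSq (X a)) l (𝓝 0)) :
    Tendsto (fun a => hsNormSq ((X a).comp B)) l (𝓝 0) :=
  tendsto_of_tendsto_of_tendsto_of_le_of_le tendsto_const_nhds hX (fun _ => zero_le)
    fun _ => hsNormSq_comp_le_of_isometry _ B hB

theorem tendsto_hsNormSq_comp_of_tendsto_apply [CompleteSpace H] {A : α → H →L[ℂ] H}
    {T : H →L[ℂ] H} (hT : IsHilbertSchmidt T) {C : ℝ} (hA_le : ∀ᶠ a in l, ‖A a‖ ≤ C)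
    (hA : ∀ x, Tendsto (fun a => A a x) l (𝓝 0)) :
    Tendsto (fun a => hsNormSq ((A a).comp T)) l (𝓝 0) := by
  obtain ⟨ι, b, -⟩ := exists_hilbertBasis ℂ H
  have hT_sum : Summable fun i => ‖T (b i)‖ ^ 2 := by
    rw [IsHilbertSchmidt, b.hsNormSq_eq_tsum] at hT
    simpa [ENNReal.toReal_ofReal, sq_nonneg] using ENNReal.summable_toReal hT.ne
  have hdom : ∀ᶠ a in l, ∀ i, ‖A a (T (b i))‖ ^ 2 ≤ C ^ 2 * ‖T (b i)‖ ^ 2 :=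
    hA_le.mono fun a ha i => by
      rw [← mul_pow]
      gcongr
      exact (A a).le_of_opNorm_le ha _
  have hlim : Tendsto (fun a => ∑' i, ‖A a (T (b i))‖ ^ 2) l (𝓝 0) := by
    have := tendsto_tsum_of_dominated_convergence (g := fun _ => (0 : ℝ))
      (hT_sum.mul_left (C ^ 2)) (fun i => by simpa using (hA (T (b i))).norm.pow 2)
      (hdom.mono fun a ha i => by simpa using ha i)
    rwa [tsum_zero] at this
  have hofReal := (ENNReal.continuous_ofReal.tendsto 0).comp hlim
  rw [ENNReal.ofReal_zero] at hofReal
  refine hofReal.congr' (hdom.mono fun a ha => ?_)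
  dsimp only [Function.comp_apply]
  have hsum_a := (hT_sum.mul_left (C ^ 2)).of_nonneg_of_le (fun _ => by positivity) ha
  rw [b.hsNormSq_eq_tsum, ENNReal.ofReal_tsum_of_nonneg (fun _ => by positivity) hsum_a]
  rfl

end Convergence

namespace IsIsometricC0Semigroup

variable {K : Type*} [NormedAddCommGroup K] [InnerProductSpace ℂ K] {V S : ℝ → K →L[ℂ] K}

theorem norm_sub_one_le (hV : IsIsometricC0Semigroup V) {t : ℝ} (ht : 0 ≤ t) : ‖V t - 1‖ ≤ 2 :=
  ContinuousLinearMap.opNorm_le_bound _ zero_le_two fun f => calc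
    ‖(V t - 1) f‖ = ‖V t f - f‖ := rfl
    _ ≤ ‖V t f‖ + ‖f‖ := norm_sub_le _ _
    _ = 2 * ‖f‖ := by rw [hV.isom t ht]; ring

theorem tendsto_sub_one_apply (hV : IsIsometricC0Semigroup V) (f : K) :
    Tendsto (fun t => (V t - 1) f) (𝓝[>] 0) (𝓝 0) := by
  have := ((hV.strong_cont f 0 Set.self_mem_Ici).mono Set.Ioi_subset_Ici_self).sub_const f
  simpa [ContinuousWithinAt, hV.map_zero] using this

theorem sub_sub_sub_eq_comp_add_comp (hV : IsIsometricC0Semigroup V) (hS : IsIsometricC0Semigroup S)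
    {t δ : ℝ} (ht : 0 ≤ t) (hδ : 0 ≤ δ) :
    (V (t + δ) - S (t + δ)) - (V t - S t) =
      (V δ - 1).comp (V t - S t) + (V δ - S δ).comp (S t) := by
  rw [add_comm, hV.map_add δ hδ t ht, hS.map_add δ hδ t ht]
  ext f
  simp only [sub_apply, ContinuousLinearMap.comp_apply, add_apply, one_apply_eq_self, map_sub]
  abel

end IsIsometricC0Semigroup

theorem stmt_14_general {K : Type*} [NormedAddCommGroup K] [InnerProductSpace ℂ K]
    [CompleteSpace K]
    (V S : ℝ → K →L[ℂ] K)
    (hV : IsIsometricC0Semigroup V) (hS : IsIsometricC0Semigroup S)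
    (hHS : ∀ t ≥ (0:ℝ), IsHilbertSchmidt (V t - S t))
    (h0 : Tendsto (fun δ : ℝ => hsNorm (V δ - S δ)) (nhdsWithin 0 (Set.Ioi 0)) (nhds 0)) :
    ∀ t ≥ (0:ℝ),
      Tendsto (fun δ : ℝ => hsNorm ((V (t + δ) - S (t + δ)) - (V t - S t)))
        (nhdsWithin 0 (Set.Ioi 0)) (nhds 0) := by
  intro t ht
  have hΔ : Tendsto (fun δ => hsNormSq (V δ - S δ)) (𝓝[>] 0) (𝓝 0) :=
    tendsto_hsNormSq_of_tendsto_hsNorm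
      (eventually_nhdsWithin_of_forall fun δ hδ => hHS δ hδ.le) h0
  have hVΔ : Tendsto (fun δ => hsNormSq ((V δ - 1).comp (V t - S t))) (𝓝[>] 0) (𝓝 0) :=
    tendsto_hsNormSq_comp_of_tendsto_apply (hHS t ht)
      (eventually_nhdsWithin_of_forall fun δ hδ => hV.norm_sub_one_le hδ.le)
      hV.tendsto_sub_one_apply
  have hΔS := tendsto_hsNormSq_comp_of_isometry (S t) (hS.isom t ht) hΔ
  refine tendsto_hsNorm_of_tendsto_hsNormSq ((tendsto_hsNormSq_add hVΔ hΔS).congr' ?_)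
  filter_upwards [self_mem_nhdsWithin] with δ hδ
  rw [hV.sub_sub_sub_eq_comp_add_comp hS ht hδ.le]

/-- let `(V_t)` and `(S_t)` be C₀-semigroups of isometries on a
separable Hilbert space such that `Δ_t = V_t - S_t` is Hilbert–Schmidt for all
`t ≥ 0` and `‖Δ_δ‖₂ → 0` as `δ → 0⁺`.  Then `t ↦ Δ_t` is right-continuous in the
Hilbert–Schmidt norm: `‖Δ_{t+δ} - Δ_t‖₂ → 0` as `δ → 0⁺` for every `t ≥ 0`. -/
theorem stmt_14 {K : Type*} [NormedAddCommGroup K] [InnerProductSpace ℂ K]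
    [CompleteSpace K] [TopologicalSpace.SeparableSpace K]
    (V S : ℝ → K →L[ℂ] K)
    (hV : IsIsometricC0Semigroup V) (hS : IsIsometricC0Semigroup S)
    (hHS : ∀ t ≥ (0:ℝ), IsHilbertSchmidt (V t - S t))
    (h0 : Tendsto (fun δ : ℝ => hsNorm (V δ - S δ)) (nhdsWithin 0 (Set.Ioi 0)) (nhds 0)) :
    ∀ t ≥ (0:ℝ),
      Tendsto (fun δ : ℝ => hsNorm ((V (t + δ) - S (t + δ)) - (V t - S t)))
        (nhdsWithin 0 (Set.Ioi 0)) (nhds 0) :=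
  stmt_14_general V S hV hS hHS h0
end
end
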